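/- If G and H are finite abelian groups with isomorphic enhanced power graphs, then G and H are isomorphic as groups. -/

import Mathlib

open SimpleGraph

/-- The enhanced power graph of a group. -/
def enhancedPowerGraph (G : Type*) [Group G] : SimpleGraph G where
  Adj x y := x ≠ y ∧ ∃ z : G, x ∈ Subgroup.zpowers z ∧ y ∈ Subgroup.zpowers z
  symm := ⟨by rintro x y ⟨h, z, hx, hy⟩; exact ⟨h.symm, z, hy, hx⟩⟩
  loopless := ⟨by rintro x ⟨h, -⟩; exact h rfl⟩

/-- The (undirected) power graph of a group. -/
def powerGraph (G : Type*) [Group G] : SimpleGraph G where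
  Adj x y := x ≠ y ∧ (x ∈ Subgroup.zpowers y ∨ y ∈ Subgroup.zpowers x)
  symm := ⟨by rintro x y ⟨h, hz⟩; exact ⟨h.symm, hz.symm⟩⟩
  loopless := ⟨by rintro x ⟨h, -⟩; exact h rfl⟩

/-- The strong product of two simple graphs. -/
def strongProd {α β : Type*} (Γ : SimpleGraph α) (Δ : SimpleGraph β) :
    SimpleGraph (α × β) where
  Adj p q := (p.1 = q.1 ∧ Δ.Adj p.2 q.2) ∨ (Γ.Adj p.1 q.1 ∧ p.2 = q.2) ∨
    (Γ.Adj p.1 q.1 ∧ Δ.Adj p.2 q.2)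
  symm := ⟨by
    rintro ⟨a, b⟩ ⟨c, d⟩ (⟨h1, h2⟩ | ⟨h1, h2⟩ | ⟨h1, h2⟩)
    · exact Or.inl ⟨h1.symm, h2.symm⟩
    · exact Or.inr (Or.inl ⟨h1.symm, h2.symm⟩)
    · exact Or.inr (Or.inr ⟨h1.symm, h2.symm⟩)⟩
  loopless := ⟨by
    rintro ⟨a, b⟩ (⟨-, h⟩ | ⟨h, -⟩ | ⟨h, -⟩) <;> exact h.ne rfl⟩

/-- The automorphism group of a simple graph, as a subgroup of permutations. -/
def graphAut {V : Type*} (Γ : SimpleGraph V) : Subgroup (Equiv.Perm V) where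
  carrier := {σ | ∀ x y, Γ.Adj (σ x) (σ y) ↔ Γ.Adj x y}
  one_mem' := fun _ _ => Iff.rfl
  mul_mem' := by
    intro σ τ hσ hτ x y
    simpa [Equiv.Perm.mul_apply] using (hσ (τ x) (τ y)).trans (hτ x y)
  inv_mem' := by
    intro σ hσ x y
    simpa using (hσ (σ⁻¹ x) (σ⁻¹ y)).symm

/-- A subgroup is maximal cyclic if it is maximal among cyclic subgroups. -/
def IsMaxCyclic {G : Type*} [Group G] (C : Subgroup G) : Prop :=
  Maximal (fun K : Subgroup G => ∃ g : G, K = Subgroup.zpowers g) C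

/-- The closed neighborhood of a vertex. -/
def closedNbhd {V : Type*} (Γ : SimpleGraph V) (x : V) : Set V :=
  Γ.neighborSet x ∪ {x}

/-!
In the enhanced power graph of a finite group, the closed neighbourhoods that are cliques are
exactly the maximal cyclic subgroups. A graph isomorphism therefore carries the cover of `G` by its
maximal cyclic subgroups to that of `H`, preserving the sizes of all intersections. Intersections
of cyclic subgroups are cyclic, and a cyclic group of order `m` has `gcd m n` solutions of
`x ^ n = 1`, so inclusion–exclusion computes the number of solutions of `x ^ n = 1` from the graph
alone.

For finite abelian groups these counts determine the group: if `G ≅ ∏ ℤ/p_i^e_i`, the equation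
`x ^ (r ^ k) = 1` has `r ^ ∑_{p_i = r} min e_i k` solutions, and the second differences in `k`
recover, for every prime `r` and every `e ≥ 1`, the number of factors `ℤ/r^e`.
-/

open Finset

section Graph

variable {V W : Type*} {Γ : SimpleGraph V} {Δ : SimpleGraph W}

lemma mem_closedNbhd {x y : V} : y ∈ closedNbhd Γ x ↔ Γ.Adj x y ∨ y = x := by
  simp [closedNbhd, or_comm]

lemma SimpleGraph.Iso.image_closedNbhd (φ : Γ ≃g Δ) (x : V) :
    φ '' closedNbhd Γ x = closedNbhd Δ (φ x) := by
  ext y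
  obtain ⟨y, rfl⟩ := φ.surjective y
  simp [φ.injective.mem_set_image, mem_closedNbhd, φ.map_adj_iff]

lemma SimpleGraph.Iso.isClique_image_iff (φ : Γ ≃g Δ) {s : Set V} :
    Δ.IsClique (φ '' s) ↔ Γ.IsClique s := by
  simp [SimpleGraph.IsClique, Set.Pairwise, φ.map_adj_iff]

open Classical in
noncomputable def cliqueClosedNbhds [Fintype V] (Γ : SimpleGraph V) : Finset (Finset V) :=
  {A | (∃ x, (A : Set V) = closedNbhd Γ x) ∧ Γ.IsClique (A : Set V)}

lemma mem_cliqueClosedNbhds [Fintype V] {A : Finset V} :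
    A ∈ cliqueClosedNbhds Γ ↔ (∃ x, (A : Set V) = closedNbhd Γ x) ∧ Γ.IsClique (A : Set V) := by
  simp [cliqueClosedNbhds]

lemma SimpleGraph.Iso.map_cliqueClosedNbhds [Fintype V] [Fintype W] (φ : Γ ≃g Δ) :
    (cliqueClosedNbhds Γ).map φ.toEquiv.finsetCongr.toEmbedding = cliqueClosedNbhds Δ := by
  ext B
  rw [mem_map_equiv, mem_cliqueClosedNbhds, mem_cliqueClosedNbhds, Equiv.finsetCongr_symm,
    Equiv.finsetCongr_apply, coe_map]
  refine and_congr ?_ φ.symm.isClique_image_iff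
  change (∃ x, φ.symm '' B = closedNbhd Γ x) ↔ _
  simp only [φ.symm.surjective.exists, ← φ.symm.image_closedNbhd,
    (Set.image_injective.mpr φ.symm.injective).eq_iff]

end Graph

section MaxCyclic

open Subgroup

variable {G : Type*} [Group G]

lemma isClique_enhancedPowerGraph_zpowers (g : G) :
    (enhancedPowerGraph G).IsClique (zpowers g : Set G) :=
  fun _ ha _ hb hab => ⟨hab, g, ha, hb⟩

lemma IsMaxCyclic.mem_of_adj {C : Subgroup G} (hC : IsMaxCyclic C) {g y : G} (hg : C = zpowers g)
    (h : (enhancedPowerGraph G).Adj g y) : y ∈ C := by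
  obtain ⟨-, z, hgz, hyz⟩ := h
  exact hC.2 ⟨z, rfl⟩ (hg ▸ zpowers_le.2 hgz) hyz

lemma IsMaxCyclic.closedNbhd_eq {C : Subgroup G} (hC : IsMaxCyclic C) {g : G}
    (hg : C = zpowers g) : closedNbhd (enhancedPowerGraph G) g = C := by
  ext y
  rw [mem_closedNbhd]
  refine ⟨?_, fun hy => ?_⟩
  · rintro (h | rfl)
    exacts [hC.mem_of_adj hg h, hg ▸ mem_zpowers _]
  · by_cases hyg : y = g
    · exact .inr hyg
    · exact .inl ⟨Ne.symm hyg, g, mem_zpowers g, hg ▸ hy⟩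

lemma exists_isMaxCyclic_mem [Finite G] (x : G) : ∃ C : Subgroup G, IsMaxCyclic C ∧ x ∈ C := by
  obtain ⟨C, hxC, hC⟩ :=
    Finite.exists_le_maximal (p := fun K : Subgroup G => ∃ g, K = zpowers g) ⟨x, rfl⟩
  exact ⟨C, hC, hxC (mem_zpowers x)⟩

lemma mem_cliqueClosedNbhds_enhancedPowerGraph [Fintype G] {A : Finset G} :
    A ∈ cliqueClosedNbhds (enhancedPowerGraph G) ↔
      ∃ C : Subgroup G, IsMaxCyclic C ∧ (A : Set G) = C := by
  rw [mem_cliqueClosedNbhds]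
  constructor
  · rintro ⟨⟨x, hA⟩, hclique⟩
    obtain ⟨C, hC, hxC⟩ := exists_isMaxCyclic_mem x
    obtain ⟨g, hg⟩ := hC.1
    have hCA : (C : Set G) ⊆ A := fun y hy => by
      rw [hA, mem_closedNbhd, or_iff_not_imp_right]
      exact fun hyx => ⟨Ne.symm hyx, g, hg ▸ hxC, hg ▸ hy⟩
    refine ⟨C, hC, (Set.Subset.antisymm ?_ hCA)⟩
    intro y hy
    by_cases hyg : y = g
    · exact hyg ▸ hg ▸ mem_zpowers g
    · exact hC.mem_of_adj hg (hclique (hCA (hg ▸ mem_zpowers g)) hy (Ne.symm hyg))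
  · rintro ⟨C, hC, hA⟩
    obtain ⟨g, hg⟩ := hC.1
    refine ⟨⟨g, by rw [hA, hC.closedNbhd_eq hg]⟩, ?_⟩
    rw [hA, hg]
    exact isClique_enhancedPowerGraph_zpowers g

end MaxCyclic

section RootCount

lemma card_pow_eq_one_of_isCyclic (K : Type*) [Group K] [IsCyclic K] [Finite K] (n : ℕ) :
    Nat.card {x : K // x ^ n = 1} = (Nat.card K).gcd n := by
  let := IsCyclic.commGroup (α := K)
  exact IsCyclic.card_powMonoidHom_ker K n

lemma card_filter_pow_eq_one_of_coe_eq {G : Type*} [Group G] [DecidableEq G] {A : Finset G}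
    {K : Subgroup G} [IsCyclic K] (hA : (A : Set G) = K) (n : ℕ) :
    #{x ∈ A | x ^ n = 1} = (#A).gcd n := by
  have hAK : ∀ x, x ∈ A ↔ x ∈ K := fun x => by rw [← mem_coe, hA, SetLike.mem_coe]
  have : Finite K := Finite.Set.subset (A : Set G) (by rw [hA])
  have hroots : {x : K // x ^ n = 1} ≃ {x // x ∈ A.filter (· ^ n = 1)} :=
    (Equiv.subtypeEquivRight fun x => by simp [Subtype.ext_iff]).trans <|
      (Equiv.subtypeSubtypeEquivSubtypeInter (· ∈ K) (· ^ n = 1)).trans <|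
        Equiv.subtypeEquivRight fun x => by simp [hAK]
  have hcard : Nat.card K = #A := by
    rw [← Nat.card_eq_finsetCard]
    exact Nat.card_congr (Equiv.subtypeEquivRight fun x => (hAK x).symm)
  rw [← Nat.card_eq_finsetCard, ← Nat.card_congr hroots, card_pow_eq_one_of_isCyclic, hcard]

def inclusionExclusionGcd {V : Type*} [Fintype V] [DecidableEq V] (𝒜 : Finset (Finset V))
    (n : ℕ) : ℤ :=
  ∑ t ∈ 𝒜.powerset with t.Nonempty, (-1) ^ (#t + 1) * ((#(t.inf id)).gcd n : ℤ)

lemma inclusionExclusionGcd_map {V W : Type*} [Fintype V] [DecidableEq V] [Fintype W]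
    [DecidableEq W] (e : V ≃ W) (𝒜 : Finset (Finset V)) (n : ℕ) :
    inclusionExclusionGcd (𝒜.map e.finsetCongr.toEmbedding) n = inclusionExclusionGcd 𝒜 n := by
  have hinj : Function.Injective (image e.finsetCongr) :=
    image_injective e.finsetCongr.injective
  have hinf (t : Finset (Finset V)) :
      (t.image e.finsetCongr).inf id = e.finsetCongr (t.inf id) := by
    ext y
    simp [mem_inf, mem_map_equiv]
  unfold inclusionExclusionGcd
  rw [map_eq_image, powerset_image, filter_image]
  simp only [Equiv.coe_toEmbedding]
  rw [sum_image hinj.injOn]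
  simp [card_image_of_injective _ e.finsetCongr.injective, hinf]

lemma card_pow_eq_one_eq_inclusionExclusionGcd {G : Type*} [Group G] [Fintype G]
    [DecidableEq G] (𝒜 : Finset (Finset G))
    (hcyc : ∀ A ∈ 𝒜, ∃ K : Subgroup G, IsCyclic K ∧ (A : Set G) = K)
    (hcover : ∀ x, ∃ A ∈ 𝒜, x ∈ A) (n : ℕ) :
    (Nat.card {x : G // x ^ n = 1} : ℤ) = inclusionExclusionGcd 𝒜 n := by
  have hroots : ({x | x ^ n = 1} : Finset G) = 𝒜.biUnion fun A => {x ∈ A | x ^ n = 1} := by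
    ext x
    simp only [mem_filter, mem_univ, true_and, mem_biUnion]
    refine ⟨fun hx => ?_, fun ⟨_, _, _, hx⟩ => hx⟩
    obtain ⟨A, hA, hxA⟩ := hcover x
    exact ⟨A, hA, hxA, hx⟩
  rw [Nat.card_eq_fintype_card, Fintype.card_subtype, hroots, inclusion_exclusion_card_biUnion,
    inclusionExclusionGcd, ← sum_coe_sort (𝒜.powerset.filter (·.Nonempty))]
  refine Fintype.sum_congr _ _ fun ⟨t, ht⟩ => ?_
  obtain ⟨ht𝒜, hne⟩ : t ⊆ 𝒜 ∧ t.Nonempty := by simpa using ht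
  have hinf : t.inf' hne (fun A => {x ∈ A | x ^ n = 1}) = {x ∈ t.inf id | x ^ n = 1} := by
    rw [← inf'_eq_inf hne, apply_inf'_eq_inf'_comp hne (fun A : Finset G => {x ∈ A | x ^ n = 1})
      fun A B => filter_inter_distrib _ A B]
    rfl
  obtain ⟨K, hK, hKt⟩ : ∃ K : Subgroup G, IsCyclic K ∧ ((t.inf id : Finset G) : Set G) = K := by
    rw [← inf'_eq_inf hne]
    refine inf'_induction hne id
      (p := fun A : Finset G => ∃ K : Subgroup G, IsCyclic K ∧ (A : Set G) = K)
      (fun A hA B hB => ?_) fun A hA => hcyc A (ht𝒜 hA)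
    obtain ⟨K, hK, hAK⟩ := hA
    obtain ⟨L, hL, hBL⟩ := hB
    exact ⟨K ⊓ L, Subgroup.isCyclic_of_le inf_le_left, by simp [hAK, hBL]⟩
  rw [hinf, card_filter_pow_eq_one_of_coe_eq hKt]

lemma card_pow_eq_one_eq_inclusionExclusionGcd_enhancedPowerGraph {G : Type*} [Group G]
    [Fintype G] [DecidableEq G] (n : ℕ) :
    (Nat.card {x : G // x ^ n = 1} : ℤ) =
      inclusionExclusionGcd (cliqueClosedNbhds (enhancedPowerGraph G)) n := by
  refine card_pow_eq_one_eq_inclusionExclusionGcd _ (fun A hA => ?_) (fun x => ?_) n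
  · obtain ⟨C, hC, hAC⟩ := mem_cliqueClosedNbhds_enhancedPowerGraph.1 hA
    obtain ⟨g, rfl⟩ := hC.1
    exact ⟨_, inferInstance, hAC⟩
  · obtain ⟨C, hC, hxC⟩ := exists_isMaxCyclic_mem x
    refine ⟨(Set.toFinite (C : Set G)).toFinset,
      mem_cliqueClosedNbhds_enhancedPowerGraph.2 ⟨C, hC, by simp⟩, by simpa⟩

lemma card_pow_eq_one_eq_of_enhancedPowerGraph_iso {G H : Type*} [Group G] [Group H] [Fintype G]
    [Fintype H] (φ : enhancedPowerGraph G ≃g enhancedPowerGraph H) (n : ℕ) :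
    Nat.card {x : G // x ^ n = 1} = Nat.card {x : H // x ^ n = 1} := by
  classical
  have hG := card_pow_eq_one_eq_inclusionExclusionGcd_enhancedPowerGraph (G := G) n
  have hH := card_pow_eq_one_eq_inclusionExclusionGcd_enhancedPowerGraph (G := H) n
  rw [← φ.map_cliqueClosedNbhds, inclusionExclusionGcd_map] at hH
  exact_mod_cast hG.trans hH.symm

end RootCount

section Exponents

variable {ι κ : Type*}

lemma sum_min_succ (s : Finset ι) (e : ι → ℕ) (k : ℕ) :
    ∑ i ∈ s, min (e i) (k + 1) = ∑ i ∈ s, min (e i) k + #{i ∈ s | k < e i} := by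
  rw [card_filter, ← sum_add_distrib]
  refine sum_congr rfl fun i _ => ?_
  split_ifs <;> omega

lemma card_filter_lt_eq (s : Finset ι) (e : ι → ℕ) (k : ℕ) :
    #{i ∈ s | k < e i} = #{i ∈ s | e i = k + 1} + #{i ∈ s | k + 1 < e i} := by
  classical
  rw [← card_union_of_disjoint (disjoint_filter.2 fun i _ h => by omega), ← filter_or]
  exact congrArg card (filter_congr fun i _ => by omega)

lemma card_filter_eq_succ_eq_of_sum_min_eq {s : Finset ι} {t : Finset κ} {e : ι → ℕ}
    {f : κ → ℕ} (h : ∀ k, ∑ i ∈ s, min (e i) k = ∑ j ∈ t, min (f j) k) (k : ℕ) :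
    #{i ∈ s | e i = k + 1} = #{j ∈ t | f j = k + 1} := by
  have hlt (k : ℕ) : #{i ∈ s | k < e i} = #{j ∈ t | k < f j} := by
    have := h (k + 1)
    rw [sum_min_succ, sum_min_succ, h k] at this
    omega
  have := hlt k
  rw [card_filter_lt_eq s, card_filter_lt_eq t, hlt (k + 1)] at this
  omega

end Exponents

section FiniteAbelian

lemma card_nsmul_eq_zero_congr {A B : Type*} [AddMonoid A] [AddMonoid B] (e : A ≃+ B) (n : ℕ) :
    Nat.card {a : A // n • a = 0} = Nat.card {b : B // n • b = 0} :=
  Nat.card_congr <| e.toEquiv.subtypeEquiv fun a => by simp [← map_nsmul]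

lemma card_nsmul_eq_zero_pi {ι : Type*} [Fintype ι] (M : ι → Type*) [∀ i, AddMonoid (M i)]
    (n : ℕ) : Nat.card {x : Π i, M i // n • x = 0} = ∏ i, Nat.card {y : M i // n • y = 0} := by
  rw [← Nat.card_pi]
  exact Nat.card_congr <|
    (Equiv.subtypeEquivRight fun x => by simp [funext_iff]).trans Equiv.subtypePiEquivPi

lemma card_nsmul_eq_zero_zmod (m n : ℕ) [NeZero m] :
    Nat.card {x : ZMod m // n • x = 0} = m.gcd n := by
  simpa using IsAddCyclic.card_nsmulAddMonoidHom_ker (ZMod m) n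

lemma Nat.Prime.gcd_pow_pow {p q : ℕ} (hp : p.Prime) (hq : q.Prime) (a b : ℕ) :
    (p ^ a).gcd (q ^ b) = if p = q then p ^ min a b else 1 := by
  split_ifs with hpq
  · subst hpq
    rcases le_total a b with hab | hab
    · rw [min_eq_left hab, Nat.gcd_eq_left (pow_dvd_pow p hab)]
    · rw [min_eq_right hab, Nat.gcd_eq_right (pow_dvd_pow p hab)]
  · exact ((Nat.coprime_primes hp hq).2 hpq).pow a b

lemma card_nsmul_eq_zero_pi_zmod_prime_pow {ι : Type*} [Fintype ι] {p e : ι → ℕ}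
    (hp : ∀ i, (p i).Prime) {r : ℕ} (hr : r.Prime) (k : ℕ) :
    Nat.card {x : Π i, ZMod (p i ^ e i) // r ^ k • x = 0} = r ^ ∑ i with p i = r, min (e i) k := by
  have (i : ι) : NeZero (p i ^ e i) := ⟨pow_ne_zero _ (hp i).ne_zero⟩
  simp_rw [card_nsmul_eq_zero_pi, card_nsmul_eq_zero_zmod, (hp _).gcd_pow_pow hr]
  rw [← prod_filter, ← prod_pow_eq_pow_sum]
  exact prod_congr rfl fun i hi => by rw [(mem_filter.1 hi).2]

lemma AddCommGroup.exists_addEquiv_pi_zmod_prime_pow (A : Type*) [AddCommGroup A] [Finite A] :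
    ∃ (ι : Type) (_ : Fintype ι) (p e : ι → ℕ), (∀ i, (p i).Prime) ∧ (∀ i, e i ≠ 0) ∧
      Nonempty (A ≃+ Π i, ZMod (p i ^ e i)) := by
  classical
  obtain ⟨ι, _, p, hp, e, ⟨f⟩⟩ := AddCommGroup.equiv_directSum_zmod_of_finite A
  refine ⟨{i // e i ≠ 0}, inferInstance, fun i => p i, fun i => e i, fun i => hp i, fun i => i.2,
    ⟨?_⟩⟩
  have (i : {i // ¬e i ≠ 0}) : Subsingleton (ZMod (p i ^ e i)) := by
    rw [not_not.1 i.2, pow_zero]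
    infer_instance
  exact f.trans <| (DirectSum.addEquivProd _).trans <| RingEquiv.toAddEquiv <|
    (RingEquiv.piEquivPiSubtypeProd (e · ≠ 0) _).trans (RingEquiv.prodZeroRing _ _).symm

lemma card_prime_pow_fiber_eq {ι κ : Type*} [Fintype ι] [Fintype κ] {p e : ι → ℕ} {q f : κ → ℕ}
    (hp : ∀ i, (p i).Prime) (he : ∀ i, e i ≠ 0) (hq : ∀ j, (q j).Prime) (hf : ∀ j, f j ≠ 0)
    (h : ∀ r, r.Prime → ∀ k, ∑ i with p i = r, min (e i) k = ∑ j with q j = r, min (f j) k)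
    (v : ℕ × ℕ) : #{i | (p i, e i) = v} = #{j | (q j, f j) = v} := by
  obtain ⟨r, k⟩ := v
  simp only [Prod.mk.injEq]
  by_cases hr : r.Prime
  · rcases k with _ | k
    · simp [he, hf]
    · simpa only [filter_filter] using card_filter_eq_succ_eq_of_sum_min_eq (h r hr) k
  · have hp' (i : ι) : p i ≠ r := fun h => hr (h ▸ hp i)
    have hq' (j : κ) : q j ≠ r := fun h => hr (h ▸ hq j)
    simp [hp', hq']

theorem AddCommGroup.nonempty_addEquiv_of_card_nsmul_eq_zero {A B : Type*} [AddCommGroup A]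
    [AddCommGroup B] [Finite A] [Finite B]
    (h : ∀ n : ℕ, Nat.card {a : A // n • a = 0} = Nat.card {b : B // n • b = 0}) :
    Nonempty (A ≃+ B) := by
  obtain ⟨ι, _, p, e, hp, he, ⟨eA⟩⟩ := exists_addEquiv_pi_zmod_prime_pow A
  obtain ⟨κ, _, q, f, hq, hf, ⟨eB⟩⟩ := exists_addEquiv_pi_zmod_prime_pow B
  have hsum (r : ℕ) (hr : r.Prime) (k : ℕ) :
      ∑ i with p i = r, min (e i) k = ∑ j with q j = r, min (f j) k := by
    apply Nat.pow_right_injective hr.two_le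
    dsimp only
    rw [← card_nsmul_eq_zero_pi_zmod_prime_pow hp hr, ← card_nsmul_eq_zero_pi_zmod_prime_pow hq hr,
      ← card_nsmul_eq_zero_congr eA, ← card_nsmul_eq_zero_congr eB, h]
  have hfiber (v : ℕ × ℕ) :
      Fintype.card {i // (p i, e i) = v} = Fintype.card {j // (q j, f j) = v} := by
    simpa only [Fintype.card_subtype] using card_prime_pow_fiber_eq hp he hq hf hsum v
  let σ : ι ≃ κ := Equiv.ofFiberEquiv fun v => Fintype.equivOfCardEq (hfiber v)
  have hσ (i : ι) : p i ^ e i = q (σ i) ^ f (σ i) := by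
    obtain ⟨hpq, hef⟩ : q (σ i) = p i ∧ f (σ i) = e i :=
      Prod.mk.inj (Equiv.ofFiberEquiv_map (fun v => Fintype.equivOfCardEq (hfiber v)) i)
    rw [hpq, hef]
  let eZMod : (Π i, ZMod (p i ^ e i)) ≃+* Π j, ZMod (q j ^ f j) :=
    (RingEquiv.piCongrRight fun i => ZMod.ringEquivCongr (hσ i)).trans
      (RingEquiv.piCongrLeft (fun j => ZMod (q j ^ f j)) σ)
  exact ⟨eA.trans (eZMod.toAddEquiv.trans eB.symm)⟩

end FiniteAbelian

theorem stmt_10 {G H : Type*} [CommGroup G] [CommGroup H] [Fintype G] [Fintype H]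
    (h : Nonempty (enhancedPowerGraph G ≃g enhancedPowerGraph H)) :
    Nonempty (G ≃* H) := by
  obtain ⟨φ⟩ := h
  have hcount := card_pow_eq_one_eq_of_enhancedPowerGraph_iso φ
  obtain ⟨e⟩ := AddCommGroup.nonempty_addEquiv_of_card_nsmul_eq_zero (A := Additive G)
    (B := Additive H) hcount
  exact ⟨MulEquiv.toAdditive.symm e⟩
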